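/- For any z₀ in the upper half plane ℍ and any γ ∈ SL₂(ℝ) with ‖γ‖ = max of absolute values of entries, the hyperbolic distance satisfies d(z₀, γ z₀) ≤ 2 log ‖γ‖ + 3 log 2 + 2 d(z₀, i). -/

import Mathlib

/-!
Since `SL(2, ℝ)` acts by isometries, the triangle inequality through `i` and `γ i` gives
`d(z₀, γ z₀) ≤ 2 d(z₀, i) + d(i, γ i)`. For `γ = (a b; c d)` one has
`cosh d(i, γ i) = (a² + b² + c² + d²) / 2 ≤ 2 ‖γ‖²`, and `eˣ ≤ 2 cosh x` turns this into
`d(i, γ i) ≤ log (4 ‖γ‖²)`.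
-/

open UpperHalfPlane

theorem Matrix.SpecialLinearGroup.fin_two_det {R : Type*} [CommRing R]
    (A : Matrix.SpecialLinearGroup (Fin 2) R) : A 0 0 * A 1 1 - A 0 1 * A 1 0 = 1 :=
  (Matrix.det_fin_two (A : Matrix (Fin 2) (Fin 2) R)).symm.trans A.det_coe

theorem Real.le_log_two_mul_of_cosh_le {x C : ℝ} (h : Real.cosh x ≤ C) :
    x ≤ Real.log (2 * C) := by
  have hexp : Real.exp x ≤ 2 * C := by
    rw [Real.cosh_eq] at h
    linarith [Real.exp_pos (-x)]
  exact (Real.le_log_iff_exp_le ((Real.exp_pos x).trans_le hexp)).2 hexp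

theorem sum_sq_le_four_mul_sq_max (a b c d : ℝ) :
    a ^ 2 + b ^ 2 + c ^ 2 + d ^ 2 ≤ 4 * max (max |a| |b|) (max |c| |d|) ^ 2 := by
  have hsq {x : ℝ} (hx : |x| ≤ max (max |a| |b|) (max |c| |d|)) :
      x ^ 2 ≤ max (max |a| |b|) (max |c| |d|) ^ 2 := by
    simpa only [sq_abs] using pow_le_pow_left₀ (abs_nonneg x) hx 2
  linarith [hsq (x := a) (by simp), hsq (x := b) (by simp), hsq (x := c) (by simp),
    hsq (x := d) (by simp)]

namespace UpperHalfPlane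

variable (γ : Matrix.SpecialLinearGroup (Fin 2) ℝ)

theorem specialLinearGroup_bottom_row_sq_pos : 0 < γ 1 0 ^ 2 + γ 1 1 ^ 2 := by
  have hdet := γ.fin_two_det
  nlinarith [sq_nonneg (γ 0 0 * γ 1 0 + γ 0 1 * γ 1 1), sq_nonneg (γ 0 0), sq_nonneg (γ 0 1)]

/-- Multiplying numerator and denominator of `(a i + b) / (c i + d)` by `d - c i`. -/
theorem coe_specialLinearGroup_smul_I :
    ((γ • I : ℍ) : ℂ) =
      ((γ 0 0 * γ 1 0 + γ 0 1 * γ 1 1 : ℝ) + Complex.I) / (γ 1 0 ^ 2 + γ 1 1 ^ 2 : ℝ) := by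
  have hdet := γ.fin_two_det
  have hN := (specialLinearGroup_bottom_row_sq_pos γ).ne'
  have hden : (γ 1 0 : ℂ) * Complex.I + γ 1 1 ≠ 0 := by
    intro h
    have hre := congrArg Complex.re h
    have him := congrArg Complex.im h
    simp only [Complex.add_re, Complex.mul_re, Complex.ofReal_re, Complex.ofReal_im,
      Complex.I_re, Complex.I_im, Complex.zero_re, Complex.add_im, Complex.mul_im,
      Complex.zero_im] at hre him
    simp_all
  rw [coe_specialLinearGroup_apply]
  simp only [Algebra.algebraMap_self_apply, coe_I]
  rw [div_eq_div_iff hden (by exact_mod_cast hN)]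
  apply Complex.ext <;> simp [sq]
  · linear_combination -γ 1 0 * hdet
  · linear_combination γ 1 1 * hdet

theorem cosh_dist_I_specialLinearGroup_smul_I :
    Real.cosh (dist I (γ • I)) = (γ 0 0 ^ 2 + γ 0 1 ^ 2 + γ 1 0 ^ 2 + γ 1 1 ^ 2) / 2 := by
  have hdet := γ.fin_two_det
  have hN := (specialLinearGroup_bottom_row_sq_pos γ).ne'
  have hre : (γ • I).re = (γ 0 0 * γ 1 0 + γ 0 1 * γ 1 1) / (γ 1 0 ^ 2 + γ 1 1 ^ 2) := by
    rw [← coe_re, coe_specialLinearGroup_smul_I, Complex.div_ofReal_re]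
    simp
  have him : (γ • I).im = 1 / (γ 1 0 ^ 2 + γ 1 1 ^ 2) := by
    rw [← coe_im, coe_specialLinearGroup_smul_I, Complex.div_ofReal_im]
    simp
  rw [cosh_dist', hre, him, I_re, I_im]
  field_simp
  linear_combination -(1 + (γ 0 0 * γ 1 1 - γ 0 1 * γ 1 0)) * hdet

theorem dist_I_specialLinearGroup_smul_I_le :
    dist I (γ • I) ≤
      2 * Real.log (max (max |γ 0 0| |γ 0 1|) (max |γ 1 0| |γ 1 1|)) + 2 * Real.log 2 := by
  set M := max (max |γ 0 0| |γ 0 1|) (max |γ 1 0| |γ 1 1|)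
  have hcosh : Real.cosh (dist I (γ • I)) ≤ 2 * M ^ 2 := by
    rw [cosh_dist_I_specialLinearGroup_smul_I]
    linarith [sum_sq_le_four_mul_sq_max (γ 0 0) (γ 0 1) (γ 1 0) (γ 1 1)]
  have hM : M ≠ 0 := by
    have := specialLinearGroup_bottom_row_sq_pos γ
    have := sum_sq_le_four_mul_sq_max (γ 0 0) (γ 0 1) (γ 1 0) (γ 1 1)
    rintro hM
    nlinarith [sq_nonneg (γ 0 0), sq_nonneg (γ 0 1)]
  calc dist I (γ • I) ≤ Real.log (2 * (2 * M ^ 2)) := Real.le_log_two_mul_of_cosh_le hcosh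
    _ = 2 * Real.log M + 2 * Real.log 2 := by
      rw [← mul_assoc, Real.log_mul (by norm_num) (pow_ne_zero 2 hM), Real.log_pow,
        show (2 : ℝ) * 2 = 2 ^ 2 by norm_num, Real.log_pow]
      push_cast
      ring

end UpperHalfPlane

/-- For any z₀ ∈ ℍ and γ ∈ SL₂(ℝ),
d(z₀, γ z₀) ≤ 2 log ‖γ‖ + 3 log 2 + 2 d(z₀, i). -/
theorem dist_smul_point_le (z₀ : UpperHalfPlane) (γ : Matrix.SpecialLinearGroup (Fin 2) ℝ) :
    dist z₀ (γ • z₀) ≤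
      2 * Real.log (max (max |γ 0 0| |γ 0 1|) (max |γ 1 0| |γ 1 1|)) + 3 * Real.log 2 +
        2 * dist z₀ UpperHalfPlane.I := by
  calc dist z₀ (γ • z₀) ≤ dist z₀ I + dist I (γ • I) + dist (γ • I) (γ • z₀) :=
        dist_triangle4 _ _ _ _
    _ = dist I (γ • I) + 2 * dist z₀ I := by rw [dist_smul, dist_comm I z₀]; ring
    _ ≤ _ := by
      linarith [dist_I_specialLinearGroup_smul_I_le γ, Real.log_nonneg (by norm_num : (1 : ℝ) ≤ 2)]
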